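/- ∫_0^∞ e^{−y} ( (1/2)·coth(y/2) − 1/y ) dy = ∑_{k=2}^{∞} (−1)^{k+1} A_k / k, where coth w = cosh w / sinh w and A_k are the reciprocal logarithm numbers defined in the context. -/

import Mathlib

/-!
Integrating the binomial series `(1 + x) ^ t = ∑ choose(t, k) x ^ k` over `t ∈ [0, 1]` gives the
generating function `x / log (1 + x) = ∑ A_k x ^ k`, because the reflection `t ↦ 1 - t` turns the
defining integral of `A_k` into `∫₀¹ choose(t, k) dt`. The substitution `x = e^{-y} - 1` turns the
integral into `∫_{-1}^0 (1 / log (1 + x) - 1 / x - 1 / 2) dx`, whose integrand is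
`∑_{k ≥ 0} A_{k+2} x ^ (k + 1)`. Since `|A_{k+2}| ≤ 1 / (k + 2)` and
`∫_{-1}^0 |x| ^ (k + 1) dx = 1 / (k + 2)`, the series can be integrated termwise.
-/

open MeasureTheory

/-- The reciprocal logarithm numbers:
`A_k = ((−1)^k / k!) ∫₀¹ ∏_{j=0}^{k−1} (t − 1 + j) dt`, with `A_0 = 1`. -/
noncomputable def A (k : ℕ) : ℝ :=
  ((-1)^k / (Nat.factorial k : ℝ)) *
    ∫ t in (0:ℝ)..1, ∏ j ∈ Finset.range k, (t - 1 + (j:ℝ))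

/-- The real hyperbolic cotangent. -/
noncomputable def rCoth (y : ℝ) : ℝ := Real.cosh y / Real.sinh y

open Real Set
open scoped Nat

lemma ring_choose_eq_prod_div (a : ℝ) (n : ℕ) :
    Ring.choose a n = (∏ j ∈ Finset.range n, (a - j)) / n ! := by
  rw [Ring.choose_eq_smul, ← Polynomial.aeval_eq_smeval, Polynomial.aeval_def,
    ← Polynomial.eval_map, descPochhammer_map, descPochhammer_eval_eq_prod_range, smul_eq_mul,
    inv_mul_eq_div]

lemma continuous_ring_choose (n : ℕ) : Continuous fun a : ℝ => Ring.choose a n := by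
  simp_rw [ring_choose_eq_prod_div]
  fun_prop

lemma abs_ring_choose_succ_le {t : ℝ} (ht : t ∈ Icc 0 1) (k : ℕ) :
    |Ring.choose t (k + 1)| ≤ 1 / (k + 1) := by
  have hprod : ∏ j ∈ Finset.range k, |t - (j + 1 : ℕ)| ≤ ∏ j ∈ Finset.range k, ((j + 1 : ℕ) : ℝ) :=
    Finset.prod_le_prod (fun _ _ => abs_nonneg _) fun j _ => by
      rw [abs_le]; push_cast; constructor <;> linarith [ht.1, ht.2, (j.cast_nonneg : (0:ℝ) ≤ j)]
  rw [← Nat.cast_prod, Finset.prod_range_add_one_eq_factorial] at hprod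
  have ht' : |t - (0 : ℕ)| ≤ 1 := by
    rw [Nat.cast_zero, sub_zero, abs_le]; constructor <;> linarith [ht.1, ht.2]
  rw [ring_choose_eq_prod_div, abs_div, Finset.abs_prod, Finset.prod_range_succ', Nat.abs_cast,
    div_le_div_iff₀ (by positivity) (by positivity), Nat.factorial_succ, Nat.cast_mul]
  calc (∏ j ∈ Finset.range k, |t - (j + 1 : ℕ)|) * |t - (0 : ℕ)| * (k + 1)
      ≤ k ! * 1 * (k + 1) := by gcongr
    _ = 1 * ((k + 1 : ℕ) * k !) := by push_cast; ring

lemma abs_ring_choose_le_one {t : ℝ} (ht : t ∈ Icc 0 1) (n : ℕ) : |Ring.choose t n| ≤ 1 := by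
  cases n with
  | zero => simp
  | succ k =>
    exact (abs_ring_choose_succ_le ht k).trans <|
      (div_le_one (by positivity)).mpr (by linarith [(k.cast_nonneg : (0:ℝ) ≤ k)])

lemma hasSum_ring_choose_mul_pow (t : ℝ) {x : ℝ} (hx : |x| < 1) :
    HasSum (fun n => Ring.choose t n * x ^ n) ((1 + x) ^ t) := by
  have hx' : x ∈ Metric.eball (0 : ℝ) 1 := by
    rw [← ENNReal.coe_one, Metric.eball_coe]; simpa using hx
  simpa [binomialSeries, mul_comm] using one_add_rpow_hasFPowerSeriesOnBall_zero.hasSum hx'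

lemma A_eq_integral_ring_choose (k : ℕ) : A k = ∫ t in (0:ℝ)..1, Ring.choose t k := by
  have hflip : ∀ t : ℝ, ∏ j ∈ Finset.range k, ((1 - t) - 1 + j) =
      (-1) ^ k * ∏ j ∈ Finset.range k, (t - j) := fun t => by
    rw [show (-1 : ℝ) ^ k = (-1) ^ (Finset.range k).card by simp, ← Finset.prod_neg]
    exact Finset.prod_congr rfl fun j _ => by ring
  have hsymm : ∫ t in (0:ℝ)..1, ∏ j ∈ Finset.range k, (t - 1 + j) =
      ∫ t in (0:ℝ)..1, ∏ j ∈ Finset.range k, ((1 - t) - 1 + j) := by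
    rw [intervalIntegral.integral_comp_sub_left (fun t => ∏ j ∈ Finset.range k, (t - 1 + j))]
    norm_num
  simp_rw [A, hsymm, hflip, ring_choose_eq_prod_div, intervalIntegral.integral_const_mul,
    intervalIntegral.integral_div]
  field_simp
  rw [← pow_mul, pow_mul', neg_one_sq, one_pow, one_mul]

lemma A_zero : A 0 = 1 := by simp [A]

lemma A_one : A 1 = 1 / 2 := by
  rw [A_eq_integral_ring_choose]
  simp only [Ring.choose_one_right, integral_id]
  norm_num

lemma abs_A_succ_le (k : ℕ) : |A (k + 1)| ≤ 1 / (k + 1) := by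
  rw [A_eq_integral_ring_choose]
  simpa using intervalIntegral.norm_integral_le_of_norm_le_const (a := 0) (b := 1)
    (f := fun t => Ring.choose t (k + 1)) (C := 1 / (k + 1))
    fun t ht => abs_ring_choose_succ_le (Ioc_subset_Icc_self (by simpa using ht)) k

lemma integral_one_add_rpow {x : ℝ} (hx : 0 < 1 + x) (hx0 : x ≠ 0) :
    ∫ t in (0:ℝ)..1, (1 + x) ^ t = x / log (1 + x) := by
  have hlog : log (1 + x) ≠ 0 := log_ne_zero_of_pos_of_ne_one hx (by simpa using hx0)
  simp_rw [rpow_def_of_pos hx]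
  rw [intervalIntegral.integral_comp_mul_left (fun t => exp t) hlog, integral_exp, mul_one,
    mul_zero, exp_log hx, exp_zero, smul_eq_mul]
  field_simp
  ring

lemma hasSum_setIntegral_of_hasSum {α E : Type*} [MeasurableSpace α] {μ : Measure α}
    [NormedAddCommGroup E] [NormedSpace ℝ E] {s : Set α} (hs : MeasurableSet s)
    {F : ℕ → α → E} {f : α → E} (hF : ∀ x ∈ s, HasSum (F · x) (f x))
    (hF_int : ∀ k, IntegrableOn (F k) s μ) (hF_sum : Summable fun k => ∫ x in s, ‖F k x‖ ∂μ) :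
    HasSum (fun k => ∫ x in s, F k x ∂μ) (∫ x in s, f x ∂μ) := by
  rw [setIntegral_congr_fun hs fun x hx => (hF x hx).tsum_eq.symm]
  exact hasSum_integral_of_summable_integral_norm hF_int hF_sum

lemma hasSum_A_mul_pow {x : ℝ} (hx : |x| < 1) (hx0 : x ≠ 0) :
    HasSum (fun k => A k * x ^ k) (x / log (1 + x)) := by
  have h1x : 0 < 1 + x := by linarith [neg_abs_le x]
  have hcont (k : ℕ) : Continuous fun t => Ring.choose t k * x ^ k :=
    (continuous_ring_choose k).mul continuous_const
  have hbound : ∀ k, ∫ t in Icc (0:ℝ) 1, ‖Ring.choose t k * x ^ k‖ ≤ |x| ^ k := fun k => by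
    calc ∫ t in Icc (0:ℝ) 1, ‖Ring.choose t k * x ^ k‖ ≤ ∫ _ in Icc (0:ℝ) 1, |x| ^ k :=
          setIntegral_mono_on (hcont k).norm.integrableOn_Icc
            continuous_const.integrableOn_Icc measurableSet_Icc fun t ht => by
              rw [norm_mul, norm_pow, norm_eq_abs, norm_eq_abs]
              exact mul_le_of_le_one_left (by positivity) (abs_ring_choose_le_one ht k)
      _ = |x| ^ k := by simp
  have hsum := hasSum_setIntegral_of_hasSum measurableSet_Icc
    (fun t _ => hasSum_ring_choose_mul_pow t hx)
    (fun k => (hcont k).integrableOn_Icc)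
    (Summable.of_nonneg_of_le (fun k => integral_nonneg fun _ => norm_nonneg _) hbound
      (summable_geometric_of_lt_one (abs_nonneg x) hx))
  simpa [integral_Icc_eq_integral_Ioc, ← intervalIntegral.integral_of_le zero_le_one,
    ← A_eq_integral_ring_choose, integral_one_add_rpow h1x hx0] using hsum

lemma hasSum_A_add_two_mul_pow {x : ℝ} (hx : |x| < 1) (hx0 : x ≠ 0) :
    HasSum (fun k => A (k + 2) * x ^ (k + 1)) (1 / log (1 + x) - 1 / x - 1 / 2) := by
  have hlog : log (1 + x) ≠ 0 :=
    log_ne_zero_of_pos_of_ne_one (by linarith [neg_abs_le x]) (by simpa using hx0)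
  have hterm (k : ℕ) : A (k + 2) * x ^ (k + 2) / x = A (k + 2) * x ^ (k + 1) := by
    field_simp
    ring
  have hval : (x / log (1 + x) - ∑ k ∈ Finset.range 2, A k * x ^ k) / x =
      1 / log (1 + x) - 1 / x - 1 / 2 := by
    simp only [Finset.sum_range_succ, Finset.sum_range_zero, A_zero, A_one]
    field_simp
    ring
  simpa only [hterm, hval] using
    ((hasSum_nat_add_iff' 2).mpr (hasSum_A_mul_pow hx hx0)).div_const x

lemma integral_Ioo_neg_one_zero_pow (n : ℕ) :
    ∫ x in Ioo (-1 : ℝ) 0, x ^ n = (-1) ^ n / (n + 1) := by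
  rw [← integral_Ioc_eq_integral_Ioo, ← intervalIntegral.integral_of_le (by norm_num),
    integral_pow, zero_pow n.succ_ne_zero, pow_succ]
  ring

lemma integral_Ioo_neg_one_zero_abs_pow (n : ℕ) :
    ∫ x in Ioo (-1 : ℝ) 0, |x| ^ n = 1 / (n + 1) := by
  have habs : ∀ x ∈ Ioo (-1 : ℝ) 0, |x| ^ n = (-1) ^ n * x ^ n := fun x hx => by
    rw [abs_of_neg hx.2, neg_pow]
  rw [setIntegral_congr_fun measurableSet_Ioo habs, integral_const_mul,
    integral_Ioo_neg_one_zero_pow, ← mul_div_assoc, ← pow_add, ← two_mul, pow_mul, neg_one_sq,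
    one_pow]

lemma hasSum_integral_one_div_log_sub :
    HasSum (fun k => A (k + 2) * ((-1) ^ (k + 1) / (k + 2)))
      (∫ x in Ioo (-1 : ℝ) 0, (1 / log (1 + x) - 1 / x - 1 / 2)) := by
  have hterm (k : ℕ) : ∫ x in Ioo (-1 : ℝ) 0, A (k + 2) * x ^ (k + 1) =
      A (k + 2) * ((-1) ^ (k + 1) / (k + 2)) := by
    rw [integral_const_mul, integral_Ioo_neg_one_zero_pow]; push_cast; ring
  have hnorm (k : ℕ) : ∫ x in Ioo (-1 : ℝ) 0, ‖A (k + 2) * x ^ (k + 1)‖ =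
      |A (k + 2)| / (k + 2) := by
    simp_rw [norm_mul, norm_pow, norm_eq_abs]
    rw [integral_const_mul, integral_Ioo_neg_one_zero_abs_pow]; push_cast; ring
  have hbound (k : ℕ) : |A (k + 2)| / (k + 2) ≤ 1 / ((k + 2 : ℕ) : ℝ) ^ 2 := by
    have hA : |A (k + 2)| ≤ 1 / (k + 2) := by
      convert abs_A_succ_le (k + 1) using 2; push_cast; ring
    push_cast
    rw [sq, ← div_div]
    gcongr
  have hsummable : Summable fun k : ℕ => 1 / ((k + 2 : ℕ) : ℝ) ^ 2 :=
    (summable_nat_add_iff 2).mpr (summable_one_div_nat_pow.mpr one_lt_two)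
  simp_rw [← hterm]
  exact hasSum_setIntegral_of_hasSum measurableSet_Ioo
    (fun x hx => hasSum_A_add_two_mul_pow (abs_lt.mpr ⟨hx.1, hx.2.trans one_pos⟩) hx.2.ne)
    (fun k => (continuous_const.mul (continuous_pow _)).integrableOn_Icc.mono_set
      Ioo_subset_Icc_self)
    (Summable.of_nonneg_of_le (fun k => integral_nonneg fun _ => norm_nonneg _)
      (fun k => (hnorm k).trans_le (hbound k)) hsummable)

lemma image_exp_neg_sub_one_Ioi : (fun y => exp (-y) - 1) '' Ioi 0 = Ioo (-1) 0 := by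
  ext x
  constructor
  · rintro ⟨y, hy, rfl⟩
    exact ⟨by linarith [exp_pos (-y)], by linarith [exp_lt_one_iff.mpr (neg_lt_zero.mpr hy)]⟩
  · rintro ⟨hx1, hx0⟩
    refine ⟨-log (1 + x), neg_pos.mpr (log_neg (by linarith) (by linarith)), ?_⟩
    simp [exp_log (by linarith : 0 < 1 + x)]

lemma integral_Ioi_exp_neg_mul_comp_exp_neg_sub_one (g : ℝ → ℝ) :
    ∫ y in Ioi 0, exp (-y) * g (exp (-y) - 1) = ∫ x in Ioo (-1) 0, g x := by
  rw [← image_exp_neg_sub_one_Ioi, integral_image_eq_integral_abs_deriv_smul measurableSet_Ioi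
    (fun y _ => ((hasDerivAt_neg y).exp.sub_const 1).hasDerivWithinAt)
    (fun a _ b _ h => neg_injective (exp_injective (sub_left_injective h)))]
  simp [abs_exp]

lemma half_mul_rCoth_half {y : ℝ} (hy : y ≠ 0) :
    1 / 2 * rCoth (y / 2) = 1 / (1 - exp (-y)) - 1 / 2 := by
  have he : exp (-y) = (exp (y / 2) ^ 2)⁻¹ := by rw [← exp_nat_mul, ← exp_neg]; ring_nf
  have hsq : exp (y / 2) ^ 2 - 1 ≠ 0 := by
    rw [← exp_nat_mul, sub_ne_zero, Ne, exp_eq_one_iff]; simpa using hy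
  rw [rCoth, cosh_eq, sinh_eq, exp_neg (y / 2), he]
  field_simp
  ring

/-- `∫₀^∞ e^{−y} ((1/2)·coth(y/2) − 1/y) dy = ∑_{k=2}^∞ (−1)^{k+1} A_k / k`,
where `A_k` are the reciprocal logarithm numbers. -/
theorem integral_coth_eq_sum_recipLog :
    ∫ y in Set.Ioi (0:ℝ), Real.exp (-y) * ((1/2) * rCoth (y/2) - 1/y) =
      ∑' k : ℕ, (-1)^((k+2)+1) * A (k+2) / ((k:ℝ) + 2) := by
  have hintegrand : ∀ y ∈ Ioi (0 : ℝ), exp (-y) * ((1/2) * rCoth (y/2) - 1/y) =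
      exp (-y) * (1 / log (1 + (exp (-y) - 1)) - 1 / (exp (-y) - 1) - 1 / 2) := fun y hy => by
    rw [add_sub_cancel, log_exp, half_mul_rCoth_half (ne_of_gt hy), ← neg_sub (exp (-y)) 1,
      div_neg]
    ring
  rw [setIntegral_congr_fun measurableSet_Ioi hintegrand,
    integral_Ioi_exp_neg_mul_comp_exp_neg_sub_one fun x => 1 / log (1 + x) - 1 / x - 1 / 2,
    hasSum_integral_one_div_log_sub.tsum_eq.symm]
  congr 1 with k
  ring
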